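/- The bimodal translation maps INL-Sahlqvist formulas to Sahlqvist formulas: if φ is an INL-Sahlqvist antecedent and ψ a positive INL formula, then τ(φ → ψ) is a Sahlqvist formula in the two-sorted normal bimodal language (i.e., τ(φ) is a Sahlqvist antecedent built from boxed atoms, pure formulas and negative formulas by ∧, ∨, ◇_∋, ◇_N, and τ(ψ) is positive). -/

import Mathlib

inductive Formula : Type where
  | var : ℕ → Formula
  | bot : Formula
  | top : Formula
  | neg : Formula → Formula
  | and : Formula → Formula → Formula
  | or : Formula → Formula → Formula
  | box : (n : ℕ) → (Fin n → Formula) → Formula → Formula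

def Sat {W : Type} (N : W → Set (Set W)) (V : ℕ → Set W) : Formula → W → Prop
  | .var p, w => w ∈ V p
  | .bot, _ => False
  | .top, _ => True
  | .neg φ, w => ¬ Sat N V φ w
  | .and φ ψ, w => Sat N V φ w ∧ Sat N V ψ w
  | .or φ ψ, w => Sat N V φ w ∨ Sat N V ψ w
  | .box _ φs φ, w =>
      ∃ S ∈ N w, (∀ s ∈ S, Sat N V φ s) ∧ ∀ i, ∃ s ∈ S, Sat N V (φs i) s

mutual
  /-- World-type formulas of the two-sorted normal bimodal language. -/
  inductive WForm : Type where
    | var : ℕ → WForm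
    | bot : WForm
    | top : WForm
    | neg : WForm → WForm
    | and : WForm → WForm → WForm
    | or : WForm → WForm → WForm
    | diaN : SForm → WForm          -- ◇_N
  /-- Subset-type formulas of the two-sorted normal bimodal language. -/
  inductive SForm : Type where
    | diaE : WForm → SForm          -- ◇_∋
    | neg : SForm → SForm
    | and : SForm → SForm → SForm
    | or : SForm → SForm → SForm
end

/-- `□_∋`, the dual of `◇_∋`. -/
def boxE (a : WForm) : SForm := .neg (.diaE (.neg a))
/-- `□_N`, the dual of `◇_N`. -/
def boxN (s : SForm) : WForm := .neg (.diaN (.neg s))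

mutual
  /-- Satisfaction for world-type formulas in `F² = (W, P(W), R^∋, R^N)`. -/
  def WSat {W : Type} (N : W → Set (Set W)) (V : ℕ → Set W) : WForm → W → Prop
    | .var p, w => w ∈ V p
    | .bot, _ => False
    | .top, _ => True
    | .neg a, w => ¬ WSat N V a w
    | .and a b, w => WSat N V a w ∧ WSat N V b w
    | .or a b, w => WSat N V a w ∨ WSat N V b w
    | .diaN s, w => ∃ X ∈ N w, SSat N V s X
  /-- Satisfaction for subset-type formulas in `F²`. -/
  def SSat {W : Type} (N : W → Set (Set W)) (V : ℕ → Set W) : SForm → Set W → Prop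
    | .diaE a, X => ∃ y ∈ X, WSat N V a y
    | .neg s, X => ¬ SSat N V s X
    | .and s t, X => SSat N V s X ∧ SSat N V t X
    | .or s t, X => SSat N V s X ∨ SSat N V t X
end

/-- The bimodal translation `τ` from INL into the two-sorted normal bimodal language:
`τ(Box_n(φ_1,…,φ_n;φ)) = ◇_N(◇_∋τ(φ_1) ∧ … ∧ ◇_∋τ(φ_n) ∧ □_∋τ(φ))`. -/
def tau : Formula → WForm
  | .var p => .var p
  | .bot => .bot
  | .top => .top
  | .neg φ => .neg (tau φ)
  | .and φ ψ => .and (tau φ) (tau ψ)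
  | .or φ ψ => .or (tau φ) (tau ψ)
  | .box n φs φ =>
      .diaN ((List.ofFn (fun i => SForm.diaE (tau (φs i)))).foldr SForm.and (boxE (tau φ)))

/-- A pure formula contains no propositional variables. -/
def PureF : Formula → Prop
  | .var _ => False
  | .bot => True
  | .top => True
  | .neg φ => PureF φ
  | .and φ ψ => PureF φ ∧ PureF ψ
  | .or φ ψ => PureF φ ∧ PureF ψ
  | .box _ φs φ => (∀ i, PureF (φs i)) ∧ PureF φ

mutual
  /-- Every occurrence of every propositional variable is under an even number of
  negations. -/
  inductive Positive : Formula → Prop where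
    | var (p : ℕ) : Positive (.var p)
    | bot : Positive .bot
    | top : Positive .top
    | neg {φ} : Negative φ → Positive (.neg φ)
    | and {φ ψ} : Positive φ → Positive ψ → Positive (.and φ ψ)
    | or {φ ψ} : Positive φ → Positive ψ → Positive (.or φ ψ)
    | box {n φs φ} : (∀ i, Positive (φs i)) → Positive φ → Positive (.box n φs φ)
  /-- Every occurrence of every propositional variable is under an odd number of
  negations. -/
  inductive Negative : Formula → Prop where
    | bot : Negative .bot
    | top : Negative .top
    | neg {φ} : Positive φ → Negative (.neg φ)
    | and {φ ψ} : Negative φ → Negative ψ → Negative (.and φ ψ)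
    | or {φ ψ} : Negative φ → Negative ψ → Negative (.or φ ψ)
    | box {n φs φ} : (∀ i, Negative (φs i)) → Negative φ → Negative (.box n φs φ)
end

/-- The defined unary box `∇_{1,θ}(ζ) := ¬Box_1(¬ζ; θ)`. -/
def Nabla (θ ζ : Formula) : Formula := .neg (.box 1 ![Formula.neg ζ] θ)

/-- Pseudo-boxed atoms: `ζ ::= p | ⊥ | ⊤ | ζ∧ζ | ∇_{1,θ}(ζ)` with `θ` pure. -/
inductive PBA : Formula → Prop where
  | var (p : ℕ) : PBA (.var p)
  | bot : PBA .bot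
  | top : PBA .top
  | and {ζ₁ ζ₂} : PBA ζ₁ → PBA ζ₂ → PBA (.and ζ₁ ζ₂)
  | nabla {θ ζ} : PureF θ → PBA ζ → PBA (Nabla θ ζ)

/-- INL-Sahlqvist antecedents: generated from pseudo-boxed atoms `ζ` and negative
formulas `γ` by `∧`, `∨`, the defined diamonds `Δ_{n,θ}(φ_1,…,φ_n) := Box_n(…;θ)` with
`θ` pure, and `Box_n(φ_1,…,φ_n; ζ)`, `Box_n(φ_1,…,φ_n; γ)`. -/
inductive INLAnt : Formula → Prop where
  | pba {ζ} : PBA ζ → INLAnt ζ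
  | negf {γ} : Negative γ → INLAnt γ
  | bot : INLAnt .bot
  | top : INLAnt .top
  | and {φ ψ} : INLAnt φ → INLAnt ψ → INLAnt (.and φ ψ)
  | or {φ ψ} : INLAnt φ → INLAnt ψ → INLAnt (.or φ ψ)
  | delta {n φs θ} : PureF θ → (∀ i, INLAnt (φs i)) → INLAnt (.box n φs θ)
  | boxz {n φs ζ} : PBA ζ → (∀ i, INLAnt (φs i)) → INLAnt (.box n φs ζ)
  | boxg {n φs γ} : Negative γ → (∀ i, INLAnt (φs i)) → INLAnt (.box n φs γ)

mutual
  /-- Pure world-type bimodal formulas (no propositional variables). -/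
  def WPure : WForm → Prop
    | .var _ => False
    | .bot => True
    | .top => True
    | .neg a => WPure a
    | .and a b => WPure a ∧ WPure b
    | .or a b => WPure a ∧ WPure b
    | .diaN s => SPure s
  /-- Pure subset-type bimodal formulas (no propositional variables). -/
  def SPure : SForm → Prop
    | .diaE a => WPure a
    | .neg s => SPure s
    | .and s t => SPure s ∧ SPure t
    | .or s t => SPure s ∧ SPure t
end

mutual
  /-- Positive world-type bimodal formulas. -/
  inductive WPos : WForm → Prop where
    | var (p : ℕ) : WPos (.var p)
    | bot : WPos .bot
    | top : WPos .top
    | neg {a} : WNeg a → WPos (.neg a)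
    | and {a b} : WPos a → WPos b → WPos (.and a b)
    | or {a b} : WPos a → WPos b → WPos (.or a b)
    | diaN {s} : SPos s → WPos (.diaN s)
  /-- Negative world-type bimodal formulas. -/
  inductive WNeg : WForm → Prop where
    | bot : WNeg .bot
    | top : WNeg .top
    | neg {a} : WPos a → WNeg (.neg a)
    | and {a b} : WNeg a → WNeg b → WNeg (.and a b)
    | or {a b} : WNeg a → WNeg b → WNeg (.or a b)
    | diaN {s} : SNeg s → WNeg (.diaN s)
  /-- Positive subset-type bimodal formulas. -/
  inductive SPos : SForm → Prop where
    | diaE {a} : WPos a → SPos (.diaE a)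
    | neg {s} : SNeg s → SPos (.neg s)
    | and {s t} : SPos s → SPos t → SPos (.and s t)
    | or {s t} : SPos s → SPos t → SPos (.or s t)
  /-- Negative subset-type bimodal formulas. -/
  inductive SNeg : SForm → Prop where
    | diaE {a} : WNeg a → SNeg (.diaE a)
    | neg {s} : SPos s → SNeg (.neg s)
    | and {s t} : SNeg s → SNeg t → SNeg (.and s t)
    | or {s t} : SNeg s → SNeg t → SNeg (.or s t)
end

/-- Boxed atoms of the world type in the two-sorted bimodal language: built from
propositional variables (or `⊤`, `⊥`) by conjunction and by prefixing boxes
`□_N`, `□_∋` possibly guarded by pure subformulas; the guarded-box constructor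
matches `τ(∇_{1,θ}(ζ)) = ¬◇_N(◇_∋¬τ(ζ) ∧ □_∋τ(θ))`. -/
inductive BAtomW : WForm → Prop where
  | var (p : ℕ) : BAtomW (.var p)
  | bot : BAtomW .bot
  | top : BAtomW .top
  | and {a b} : BAtomW a → BAtomW b → BAtomW (.and a b)
  | gbox {θ a} : WPure θ → BAtomW a →
      BAtomW (.neg (.diaN (.and (.diaE (.neg a)) (boxE θ))))

mutual
  /-- Sahlqvist antecedents of the world type in the two-sorted bimodal language:
  built from boxed atoms, pure formulas and negative formulas using `∧`, `∨` and the
  diamonds `◇_∋`, `◇_N`. -/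
  inductive SahlAntW : WForm → Prop where
    | batom {a} : BAtomW a → SahlAntW a
    | pure {a} : WPure a → SahlAntW a
    | negf {a} : WNeg a → SahlAntW a
    | bot : SahlAntW .bot
    | top : SahlAntW .top
    | and {a b} : SahlAntW a → SahlAntW b → SahlAntW (.and a b)
    | or {a b} : SahlAntW a → SahlAntW b → SahlAntW (.or a b)
    | diaN {s} : SahlAntS s → SahlAntW (.diaN s)
  /-- Sahlqvist antecedents of the subset type. -/
  inductive SahlAntS : SForm → Prop where
    | pure {s} : SPure s → SahlAntS s
    | negf {s} : SNeg s → SahlAntS s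
    | batomBox {a} : BAtomW a → SahlAntS (boxE a)
    | diaE {a} : SahlAntW a → SahlAntS (.diaE a)
    | and {s t} : SahlAntS s → SahlAntS t → SahlAntS (.and s t)
    | or {s t} : SahlAntS s → SahlAntS t → SahlAntS (.or s t)
end

/-! The translation is checked constructor by constructor. The one non-obvious case is
`∇_{1,θ}(ζ)`: its translation `¬◇_N(◇_∋¬τ(ζ) ∧ □_∋τ(θ))` is a guarded box of `τ(ζ)`, so
pseudo-boxed atoms become boxed atoms. Every `Box_n(φ_1,…,φ_n;χ)` becomes a `◇_N` over
`◇_∋`-diamonds of the translated arguments and `□_∋τ(χ)`, which is pure, the `□_∋` of a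
boxed atom, or negative according as `χ` is pure, pseudo-boxed or negative. -/

theorem SForm.foldr_and_ofFn {P : SForm → Prop} (hand : ∀ {s t}, P s → P t → P (.and s t))
    {n : ℕ} {f : Fin n → SForm} {b : SForm} (hf : ∀ i, P (f i)) (hb : P b) :
    P ((List.ofFn f).foldr .and b) := by
  induction n with
  | zero => exact hb
  | succ n ih =>
      rw [List.ofFn_succ, List.foldr_cons]
      exact hand (hf 0) (ih fun i => hf i.succ)

mutual

theorem Positive.wPos_tau : ∀ {φ : Formula}, Positive φ → WPos (tau φ)
  | _, .var p => .var p
  | _, .bot => .bot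
  | _, .top => .top
  | _, .neg h => .neg h.wNeg_tau
  | _, .and h₁ h₂ => .and h₁.wPos_tau h₂.wPos_tau
  | _, .or h₁ h₂ => .or h₁.wPos_tau h₂.wPos_tau
  | _, .box hs h =>
      .diaN (SForm.foldr_and_ofFn SPos.and (fun i => .diaE (hs i).wPos_tau)
        (.neg (.diaE (.neg h.wPos_tau))))

theorem Negative.wNeg_tau : ∀ {φ : Formula}, Negative φ → WNeg (tau φ)
  | _, .bot => .bot
  | _, .top => .top
  | _, .neg h => .neg h.wPos_tau
  | _, .and h₁ h₂ => .and h₁.wNeg_tau h₂.wNeg_tau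
  | _, .or h₁ h₂ => .or h₁.wNeg_tau h₂.wNeg_tau
  | _, .box hs h =>
      .diaN (SForm.foldr_and_ofFn SNeg.and (fun i => .diaE (hs i).wNeg_tau)
        (.neg (.diaE (.neg h.wNeg_tau))))

end

theorem PureF.wPure_tau : ∀ {φ : Formula}, PureF φ → WPure (tau φ)
  | .bot, _ | .top, _ => trivial
  | .neg φ, h => wPure_tau (φ := φ) h
  | .and φ ψ, h | .or φ ψ, h => ⟨wPure_tau (φ := φ) h.1, wPure_tau (φ := ψ) h.2⟩
  | .box _ φs φ, h =>
      SForm.foldr_and_ofFn (P := SPure) (fun hs ht => ⟨hs, ht⟩)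
        (fun i => wPure_tau (φ := φs i) (h.1 i)) (wPure_tau (φ := φ) h.2)

theorem tau_nabla (θ ζ : Formula) :
    tau (Nabla θ ζ) = .neg (.diaN (.and (.diaE (.neg (tau ζ))) (boxE (tau θ)))) :=
  rfl

theorem PBA.bAtomW_tau {ζ : Formula} (h : PBA ζ) : BAtomW (tau ζ) := by
  induction h with
  | var p => exact .var p
  | bot => exact .bot
  | top => exact .top
  | and _ _ ih₁ ih₂ => exact .and ih₁ ih₂
  | nabla hθ _ ih => exact tau_nabla _ _ ▸ .gbox hθ.wPure_tau ih

theorem INLAnt.sahlAntW_tau {φ : Formula} (h : INLAnt φ) : SahlAntW (tau φ) := by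
  induction h with
  | pba h => exact .batom h.bAtomW_tau
  | negf h => exact .negf h.wNeg_tau
  | bot => exact .bot
  | top => exact .top
  | and _ _ ih₁ ih₂ => exact .and ih₁ ih₂
  | or _ _ ih₁ ih₂ => exact .or ih₁ ih₂
  | delta hθ _ ih =>
      exact .diaN (SForm.foldr_and_ofFn SahlAntS.and (fun i => .diaE (ih i))
        (.pure (hθ.wPure_tau : WPure _)))
  | boxz hζ _ ih =>
      exact .diaN (SForm.foldr_and_ofFn SahlAntS.and (fun i => .diaE (ih i))
        (.batomBox hζ.bAtomW_tau))
  | boxg hγ _ ih =>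
      exact .diaN (SForm.foldr_and_ofFn SahlAntS.and (fun i => .diaE (ih i))
        (.negf (.neg (.diaE (.neg hγ.wNeg_tau)))))

/-- the bimodal translation maps INL-Sahlqvist formulas to Sahlqvist
formulas in the two-sorted normal bimodal language: if `φ` is an INL-Sahlqvist
antecedent and `ψ` a positive INL formula, then `τ(φ)` is a Sahlqvist antecedent
(built from boxed atoms, pure formulas and negative formulas by `∧`, `∨`, `◇_∋`, `◇_N`)
and `τ(ψ)` is positive, i.e. `τ(φ → ψ)` is a bimodal Sahlqvist formula. -/
theorem stmt_13 (φ ψ : Formula) (hφ : INLAnt φ) (hψ : Positive ψ) :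
    SahlAntW (tau φ) ∧ WPos (tau ψ) :=
  ⟨hφ.sahlAntW_tau, hψ.wPos_tau⟩
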